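/- (Morse potential eigenstates.) Let D > 0, α > 0, set λ := √(2D)/α and ω₀ := √(2D)·α, let n ∈ ℕ satisfy n < λ − 1/2, and set ξ(x) := 2λ·exp(−αx) for x ∈ ℝ. Let L : (0,∞) → ℝ be a twice continuously differentiable function satisfying the generalized Laguerre differential equation ξ·L''(ξ) + (2λ − 2n − 1 + 1 − ξ)·L'(ξ) + n·L(ξ) = 0 for all ξ > 0. Define ψ : ℝ × ℝ → ℂ by ψ(x,t) := ξ(x)^{λ−n−1/2} · L(ξ(x)) · exp(−ξ(x)/2 − i·t·((n + 1/2) − (1/(2λ))(n + 1/2)²)·ω₀). Then ψ satisfies i∂_tψ(x,t) + ½∂_x²ψ(x,t) − D(1 − exp(−αx))²·ψ(x,t) = 0 for all (x,t) ∈ ℝ²; the same holds for any constant complex multiple of ψ. -/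

import Mathlib

noncomputable section

/-- `λ := √(2D)/α` for the Morse potential. -/
def morseLam (D α : ℝ) : ℝ := Real.sqrt (2 * D) / α

/-- `ω₀ := √(2D)·α` for the Morse potential. -/
def morseOmega (D α : ℝ) : ℝ := Real.sqrt (2 * D) * α

/-- `ξ(x) := 2λ·exp(−αx)`. -/
def morseXi (D α x : ℝ) : ℝ := 2 * morseLam D α * Real.exp (-α * x)

/-- The energy `E_n := ((n + 1/2) − (1/(2λ))(n + 1/2)²)·ω₀`. -/
def morseEnergy (D α : ℝ) (n : ℕ) : ℝ :=
  (((n : ℝ) + 1 / 2) - (1 / (2 * morseLam D α)) * ((n : ℝ) + 1 / 2) ^ 2) * morseOmega D α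

/-- The Morse eigenstate `ψ(x,t) = ξ(x)^{λ−n−1/2}·L(ξ(x))·exp(−ξ(x)/2 − i·t·E_n)`,
for a function `L` satisfying the generalized Laguerre differential equation. -/
def morseWave (D α : ℝ) (n : ℕ) (L : ℝ → ℝ) (x t : ℝ) : ℂ :=
  (((morseXi D α x ^ (morseLam D α - (n : ℝ) - 1 / 2) * L (morseXi D α x)
      * Real.exp (-(morseXi D α x) / 2)) : ℝ) : ℂ) *
    Complex.exp (-Complex.I * (t : ℂ) * ((morseEnergy D α n : ℝ) : ℂ))

/-!
Put `ξ = 2λe^{-αx}`, so that `d/dx = -αξ d/dξ`, and `s = λ - n - 1/2`. Conjugating the Euler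
operator `ξ d/dξ` by `ξ^s e^{-ξ/2}` gives `M ↦ sM + ξM' - ξM/2`; applying this twice to a solution
of the Laguerre equation `ξL'' + (2s + 1 - ξ)L' + nL = 0` multiplies `L` by `s² - λξ + ξ²/4`.
Hence the spatial factor `F = ξ^s L(ξ) e^{-ξ/2}` satisfies `F'' = α²(s² - λξ + ξ²/4)F`, which is
`2(V - E_n)F` because `2D = λ²α²`, and the stationary state `F(x)e^{-iE_n t}` solves the
Schrödinger equation.
-/

/-- `u^{-p} e^{u/2} (u d/du) (u^p e^{-u/2} M(u))` -/
def conjEuler (p : ℝ) (M : ℝ → ℝ) (u : ℝ) : ℝ :=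
  p * M u + u * deriv M u - u / 2 * M u

lemma hasDerivAt_rpow_mul_mul_exp_comp {g M : ℝ → ℝ} {α p x : ℝ}
    (hg : HasDerivAt g (-α * g x) x) (hgx : 0 < g x) (hM : DifferentiableAt ℝ M (g x)) :
    HasDerivAt (fun y => g y ^ p * M (g y) * Real.exp (-g y / 2))
      (-α * (g x ^ p * conjEuler p M (g x) * Real.exp (-g x / 2))) x := by
  have hpow : HasDerivAt (fun y => g y ^ p) (p * g x ^ (p - 1) * (-α * g x)) x :=
    (Real.hasDerivAt_rpow_const (Or.inl hgx.ne')).comp x hg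
  refine ((hpow.mul (hM.hasDerivAt.comp x hg)).mul (hg.neg.div_const 2).exp).congr_deriv ?_
  simp only [Pi.mul_apply, Pi.neg_apply, Function.comp_apply]
  rw [Real.rpow_sub_one hgx.ne', conjEuler]
  field_simp
  ring

lemma conjEuler_conjEuler_of_laguerre {L : ℝ → ℝ} {s ν u : ℝ}
    (hL : DifferentiableAt ℝ L u) (hL' : DifferentiableAt ℝ (deriv L) u)
    (hODE : u * deriv (deriv L) u + (2 * s + 1 - u) * deriv L u + ν * L u = 0) :
    conjEuler s (conjEuler s L) u = (s ^ 2 - (ν + s + 1 / 2) * u + u ^ 2 / 4) * L u := by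
  have hderiv : HasDerivAt (conjEuler s L)
      (s * deriv L u + (deriv L u + u * deriv (deriv L) u) - (L u / 2 + u / 2 * deriv L u)) u := by
    refine ((hL.hasDerivAt.const_mul s).add ((hasDerivAt_id u).mul hL'.hasDerivAt)).sub
      (((hasDerivAt_id u).div_const 2).mul hL.hasDerivAt) |>.congr_deriv ?_
    simp only [id_eq]
    ring
  rw [conjEuler, hderiv.deriv, conjEuler]
  linear_combination u * hODE

lemma DifferentiableAt.conjEuler {M : ℝ → ℝ} {p u : ℝ} (hM : DifferentiableAt ℝ M u)
    (hM' : DifferentiableAt ℝ (deriv M) u) : DifferentiableAt ℝ (conjEuler p M) u :=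
  ((hM.const_mul p).add (differentiableAt_id.mul hM')).sub
    ((differentiableAt_id.div_const 2).mul hM)

lemma hasDerivAt_morseXi (D α x : ℝ) : HasDerivAt (morseXi D α) (-α * morseXi D α x) x := by
  have h := (((hasDerivAt_id x).const_mul (-α)).exp).const_mul (2 * morseLam D α)
  refine h.congr_deriv ?_
  simp only [morseXi, id_eq]
  ring

lemma morseXi_pos {D α : ℝ} (hlam : 0 < morseLam D α) (x : ℝ) : 0 < morseXi D α x :=
  mul_pos (by positivity) (Real.exp_pos _)

def morseProfile (D α s : ℝ) (M : ℝ → ℝ) (x : ℝ) : ℝ :=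
  morseXi D α x ^ s * M (morseXi D α x) * Real.exp (-morseXi D α x / 2)

lemma hasDerivAt_morseProfile {D α : ℝ} (hlam : 0 < morseLam D α) (s : ℝ) {M : ℝ → ℝ} {x : ℝ}
    (hM : DifferentiableAt ℝ M (morseXi D α x)) :
    HasDerivAt (morseProfile D α s M) (-α * morseProfile D α s (conjEuler s M) x) x :=
  hasDerivAt_rpow_mul_mul_exp_comp (hasDerivAt_morseXi D α x) (morseXi_pos hlam x) hM

lemma sq_mul_morseProfile_conjEuler_conjEuler {D α : ℝ} (hD : 0 < D) (hα : α ≠ 0) (n : ℕ)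
    {L : ℝ → ℝ} {x : ℝ} (hL : DifferentiableAt ℝ L (morseXi D α x))
    (hL' : DifferentiableAt ℝ (deriv L) (morseXi D α x))
    (hODE : morseXi D α x * deriv (deriv L) (morseXi D α x)
      + ((2 * morseLam D α - 2 * (n : ℝ) - 1) + 1 - morseXi D α x) * deriv L (morseXi D α x)
      + (n : ℝ) * L (morseXi D α x) = 0) :
    α ^ 2 * morseProfile D α (morseLam D α - n - 1 / 2)
        (conjEuler (morseLam D α - n - 1 / 2) (conjEuler (morseLam D α - n - 1 / 2) L)) x
      = 2 * (D * (1 - Real.exp (-α * x)) ^ 2 - morseEnergy D α n)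
        * morseProfile D α (morseLam D α - n - 1 / 2) L x := by
  set s := morseLam D α - n - 1 / 2
  set ξ := morseXi D α x
  have hsqrt : Real.sqrt (2 * D) = morseLam D α * α := by
    rw [morseLam]; field_simp
  have h2D : 2 * D = morseLam D α ^ 2 * α ^ 2 := by
    rw [← Real.sq_sqrt (by positivity : (0 : ℝ) ≤ 2 * D), hsqrt]; ring
  have hlam : morseLam D α ≠ 0 := by
    rintro h; rw [h] at h2D; linarith
  have hE : 2 * morseEnergy D α n = α ^ 2 * (morseLam D α ^ 2 - s ^ 2) := by
    rw [morseEnergy, morseOmega, hsqrt]; field_simp; ring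
  have hcoeff : α ^ 2 * (s ^ 2 - (n + s + 1 / 2) * ξ + ξ ^ 2 / 4)
      = 2 * (D * (1 - Real.exp (-α * x)) ^ 2 - morseEnergy D α n) := by
    simp only [ξ, morseXi]
    linear_combination hE - (1 - Real.exp (-α * x)) ^ 2 * h2D
  rw [morseProfile, morseProfile,
    conjEuler_conjEuler_of_laguerre (ν := n) hL hL' (by linear_combination hODE), ← hcoeff]
  ring

lemma schrodinger_of_stationary {F F' : ℝ → ℝ} {F'' V E x : ℝ}
    (hF : ∀ y, HasDerivAt F (F' y) y) (hF' : HasDerivAt F' F'' x)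
    (hF'' : F'' = 2 * (V - E) * F x) (c : ℂ) (t : ℝ) :
    Complex.I * deriv (fun s : ℝ => c * ((F x : ℂ) * Complex.exp (-Complex.I * s * E))) t
      + 1 / 2 * deriv (deriv fun y : ℝ => c * ((F y : ℂ) * Complex.exp (-Complex.I * t * E))) x
      - (V : ℂ) * (c * ((F x : ℂ) * Complex.exp (-Complex.I * t * E))) = 0 := by
  set e := Complex.exp (-Complex.I * t * E)
  have hphase : HasDerivAt (fun s : ℝ => -Complex.I * s * E) (-Complex.I * E) t := by
    simpa using ((hasDerivAt_id (t : ℂ)).comp_ofReal.const_mul (-Complex.I)).mul_const (E : ℂ)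
  have hspace : deriv (fun y : ℝ => c * ((F y : ℂ) * e)) = fun y => c * ((F' y : ℂ) * e) :=
    funext fun y => (((hF y).ofReal_comp.mul_const e).const_mul c).deriv
  rw [((hphase.cexp.const_mul (F x : ℂ)).const_mul c).deriv, hspace,
    ((hF'.ofReal_comp.mul_const e).const_mul c).deriv, hF'']
  push_cast
  linear_combination -(c * F x * e * E) * Complex.I_sq

/-- Morse potential eigenstates: if `D, α > 0`, `n < λ − 1/2`, and
`L ∈ C²((0,∞);ℝ)` satisfies `ξL'' + (2λ − 2n − 1 + 1 − ξ)L' + nL = 0` on `(0,∞)`, then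
`ψ = morseWave D α n L` satisfies `i∂_tψ + ½∂_x²ψ − D(1 − e^{−αx})²·ψ = 0` on `ℝ²`,
and so does every constant complex multiple `c·ψ`. -/
theorem morse_solution (D α : ℝ) (hD : 0 < D) (hα : 0 < α) (n : ℕ)
    (hn : (n : ℝ) < morseLam D α - 1 / 2)
    (L : ℝ → ℝ) (hL : ContDiffOn ℝ 2 L (Set.Ioi (0 : ℝ)))
    (hODE : ∀ ξ ∈ Set.Ioi (0 : ℝ),
      ξ * deriv (deriv L) ξ + ((2 * morseLam D α - 2 * (n : ℝ) - 1) + 1 - ξ) * deriv L ξ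
        + (n : ℝ) * L ξ = 0) :
    (∀ x t : ℝ,
      Complex.I * deriv (fun s => morseWave D α n L x s) t
        + (1 / 2) * deriv (deriv (fun y => morseWave D α n L y t)) x
        - ((D * (1 - Real.exp (-α * x)) ^ 2 : ℝ) : ℂ) * morseWave D α n L x t = 0) ∧
    (∀ c : ℂ, ∀ x t : ℝ,
      Complex.I * deriv (fun s => c * morseWave D α n L x s) t
        + (1 / 2) * deriv (deriv (fun y => c * morseWave D α n L y t)) x
        - ((D * (1 - Real.exp (-α * x)) ^ 2 : ℝ) : ℂ) * (c * morseWave D α n L x t) = 0) := by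
  have hlam : 0 < morseLam D α := by linarith [n.cast_nonneg (α := ℝ)]
  have hL1 (x : ℝ) : DifferentiableAt ℝ L (morseXi D α x) :=
    hL.differentiableOn (by norm_num) |>.differentiableAt
      (isOpen_Ioi.mem_nhds (morseXi_pos hlam x))
  have hL2 (x : ℝ) : DifferentiableAt ℝ (deriv L) (morseXi D α x) :=
    (hL.deriv_of_isOpen (m := 1) isOpen_Ioi (by norm_num)).differentiableOn (by norm_num)
      |>.differentiableAt (isOpen_Ioi.mem_nhds (morseXi_pos hlam x))
  set s := morseLam D α - n - 1 / 2
  have hwave (c : ℂ) (x t : ℝ) := schrodinger_of_stationary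
    (fun y => hasDerivAt_morseProfile hlam s (hL1 y))
    ((hasDerivAt_morseProfile hlam s ((hL1 x).conjEuler (hL2 x))).const_mul (-α))
    (by rw [← mul_assoc, neg_mul_neg, ← sq]
        exact sq_mul_morseProfile_conjEuler_conjEuler hD hα.ne' n (hL1 x) (hL2 x)
          (hODE _ (morseXi_pos hlam x))) c t
  refine ⟨fun x t => ?_, hwave⟩
  have h := hwave 1 x t
  simp only [one_mul] at h
  exact h

end
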